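/- arXiv:2401.10169 — 2 statements merged into one kernel-verified Lean document; each statement's English description precedes it below -/
import Mathlib

section
/- For all real x > 0 and all real v > −1/2, I_v(x) < (cosh x / Γ(v+1)) · (x/2)^v. -/
/-!
Splitting off `(x/2)^v / Γ(v+1)`, the `m`-th term of the Bessel series is
`x^(2m) / (2m)!` times `(2m)! Γ(v+1) / (4^m m! Γ(m+v+1))`, and the `x^(2m) / (2m)!` sum to `cosh x`.
The correction factor is a product of the ratios `(k - 1/2) / (k + v)` for `k = 1, …, m`,
hence at most `1`, and strictly less than `1` from `m = 1` on because `v > -1/2`.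
-/

open Real Polynomial Polynomial.Chebyshev Finset

noncomputable def besselI (v x : ℝ) : ℝ :=
  ∑' m : ℕ, (1 / (m.factorial * Real.Gamma ((m : ℝ) + v + 1))) * (x / 2) ^ (2 * (m : ℝ) + v)

lemma Gamma_natCast_succ_add {a : ℝ} (ha : 0 < a) (m : ℕ) :
    Gamma (((m + 1 : ℕ) : ℝ) + a) = (m + a) * Gamma (m + a) := by
  rw [← Gamma_add_one (by positivity)]
  push_cast
  ring_nf

lemma factorial_two_mul_mul_Gamma_le {a : ℝ} (ha : 1 / 2 ≤ a) (m : ℕ) :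
    ((2 * m).factorial : ℝ) * Gamma a ≤ 4 ^ m * m.factorial * Gamma (m + a) := by
  have ha₀ : 0 < a := by linarith
  induction m with
  | zero => simp
  | succ m ih =>
    have hΓ : 0 < Gamma (m + a) := Gamma_pos_of_pos (by positivity)
    have hfact : ((2 * (m + 1)).factorial : ℝ) = (2 * m + 2) * (2 * m + 1) * (2 * m).factorial := by
      rw [show 2 * (m + 1) = 2 * m + 1 + 1 by ring, Nat.factorial_succ, Nat.factorial_succ]
      push_cast
      ring
    rw [hfact, Gamma_natCast_succ_add ha₀, mul_assoc]
    calc (2 * m + 2) * (2 * m + 1) * ((2 * m).factorial * Gamma a)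
        ≤ (2 * m + 2) * (2 * m + 1) * (4 ^ m * m.factorial * Gamma (m + a)) := by gcongr
      _ ≤ 4 * (m + 1) * (m + a) * (4 ^ m * m.factorial * Gamma (m + a)) := by
          gcongr ?_ * _
          nlinarith
      _ = 4 ^ (m + 1) * (m + 1).factorial * ((m + a) * Gamma (m + a)) := by
          rw [Nat.factorial_succ]
          push_cast
          ring

lemma Gamma_lt_two_mul_Gamma_add_one {a : ℝ} (ha : 1 / 2 < a) : Gamma a < 2 * Gamma (a + 1) := by
  rw [Gamma_add_one (by positivity)]
  nlinarith [Gamma_pos_of_pos (show 0 < a by linarith)]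

noncomputable def besselITerm (v x : ℝ) (m : ℕ) : ℝ :=
  (1 / (m.factorial * Gamma ((m : ℝ) + v + 1))) * (x / 2) ^ (2 * (m : ℝ) + v)

lemma besselI_eq_tsum_besselITerm (v x : ℝ) : besselI v x = ∑' m, besselITerm v x m := rfl

lemma besselITerm_nonneg {v x : ℝ} (hv : -1 < v) (hx : 0 ≤ x) (m : ℕ) : 0 ≤ besselITerm v x m := by
  have : 0 < Gamma ((m : ℝ) + v + 1) := Gamma_pos_of_pos (by linarith [m.cast_nonneg (α := ℝ)])
  unfold besselITerm
  positivity

lemma besselITerm_eq {x : ℝ} (hx : 0 < x) (v : ℝ) (m : ℕ) :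
    besselITerm v x m = x ^ (2 * m) / (4 ^ m * m.factorial * Gamma (m + (v + 1))) * (x / 2) ^ v := by
  have hsplit : (x / 2) ^ (2 * (m : ℝ) + v) = x ^ (2 * m) / 4 ^ m * (x / 2) ^ v := by
    rw [rpow_add (by positivity), show 2 * (m : ℝ) = (2 * m : ℕ) by push_cast; ring, rpow_natCast,
      div_pow, pow_mul 2]
    norm_num
  rw [besselITerm, hsplit, ← add_assoc]
  field_simp

lemma besselITerm_le {v x : ℝ} (hv : -1 / 2 ≤ v) (hx : 0 < x) (m : ℕ) :
    besselITerm v x m ≤ x ^ (2 * m) / (2 * m).factorial / Gamma (v + 1) * (x / 2) ^ v := by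
  have hΓ : 0 < Gamma (v + 1) := Gamma_pos_of_pos (by linarith)
  rw [besselITerm_eq hx, div_div]
  gcongr _ / ?_ * _
  exact factorial_two_mul_mul_Gamma_le (a := v + 1) (by linarith) m

lemma besselITerm_one_lt {v x : ℝ} (hv : -1 / 2 < v) (hx : 0 < x) :
    besselITerm v x 1 < x ^ (2 * 1) / (2 * 1).factorial / Gamma (v + 1) * (x / 2) ^ v := by
  have hΓ : 0 < Gamma (v + 1) := Gamma_pos_of_pos (by linarith)
  have hlt := Gamma_lt_two_mul_Gamma_add_one (show 1 / 2 < v + 1 by linarith)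
  rw [besselITerm_eq hx, div_div]
  gcongr _ / ?_ * _
  norm_num [add_comm 1 (v + 1)]
  linarith

theorem besselI_upper_bound (x v : ℝ) (hx : 0 < x) (hv : -1/2 < v) :
    besselI v x < (Real.cosh x / Real.Gamma (v + 1)) * (x / 2) ^ v := by
  have hcosh : HasSum (fun m : ℕ ↦ x ^ (2 * m) / (2 * m).factorial / Gamma (v + 1) * (x / 2) ^ v)
      (cosh x / Gamma (v + 1) * (x / 2) ^ v) :=
    ((hasSum_cosh x).div_const _).mul_right _
  rw [besselI_eq_tsum_besselITerm, ← hcosh.tsum_eq]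
  exact Summable.tsum_lt_tsum_of_nonneg (besselITerm_nonneg (by linarith) hx.le)
    (besselITerm_le hv.le hx) (besselITerm_one_lt hv hx) hcosh.summable
end

section
/- For every natural number N ≥ 1 and real t > 0, the expression (e^{2Nt} − 1)(e^{2t} − 2r e^t + 1) − 2(−1)^N e^{Nt}(e^{2t} − 1) is strictly positive, where r = I_{N+1}(1)/I_N(1). -/
open Real Polynomial Polynomial.Chebyshev Finset

/-!
Comparing the Bessel series term by term gives `I_{N+1}(1) ≤ I_N(1) / (2(N+1))`, so `r ≤ 1/2`.
Put `x = e^t > 1` and `y = x^N`. For odd `N` every summand is positive. For even `N` we have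
`y ≥ x²`; with `r` replaced by `1/2` the expression is increasing in `y` on `[x², ∞)`, and at
`y = x²` it equals `(x + 1)(x² + x + 1)(x - 1)³ > 0`.
-/

noncomputable def besselTerm (n : ℕ) (x : ℝ) (m : ℕ) : ℝ :=
  (x / 2) ^ (2 * m + n) / (m.factorial * (m + n).factorial)

lemma besselI_natCast (n : ℕ) (x : ℝ) : besselI n x = ∑' m, besselTerm n x m := by
  refine tsum_congr fun m => ?_
  have hGamma : Real.Gamma ((m : ℝ) + n + 1) = (m + n).factorial := by
    exact_mod_cast Real.Gamma_nat_eq_factorial (m + n)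
  have hpow : (x / 2) ^ (2 * (m : ℝ) + n) = (x / 2) ^ (2 * m + n) := by
    exact_mod_cast Real.rpow_natCast (x / 2) (2 * m + n)
  rw [besselTerm, hGamma, hpow, one_div_mul_eq_div]

lemma besselTerm_succ (n : ℕ) (x : ℝ) (m : ℕ) :
    besselTerm (n + 1) x m = x / (2 * (m + n + 1)) * besselTerm n x m := by
  simp only [besselTerm, show m + (n + 1) = m + n + 1 by omega, Nat.factorial_succ,
    show 2 * m + (n + 1) = 2 * m + n + 1 by omega, pow_succ]
  push_cast
  field_simp

lemma besselTerm_nonneg (n : ℕ) {x : ℝ} (hx : 0 ≤ x) (m : ℕ) : 0 ≤ besselTerm n x m := by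
  unfold besselTerm; positivity

lemma summable_besselTerm (n : ℕ) (x : ℝ) : Summable (besselTerm n x) := by
  refine Summable.of_norm_bounded
    ((Real.summable_pow_div_factorial (|x / 2| ^ 2)).mul_left (|x / 2| ^ n)) fun m => ?_
  have hfac : (1 : ℝ) ≤ (m + n).factorial := by exact_mod_cast (m + n).factorial_pos
  rw [besselTerm, norm_div, norm_mul, Real.norm_eq_abs, abs_pow, ← pow_mul, mul_div_assoc',
    ← pow_add, Nat.add_comm n]
  simp only [RCLike.norm_natCast]
  rw [mul_comm (m.factorial : ℝ)]
  exact div_le_div_of_nonneg_left (by positivity) (by positivity)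
    (le_mul_of_one_le_left (by positivity) hfac)

lemma besselI_natCast_pos (n : ℕ) {x : ℝ} (hx : 0 < x) : 0 < besselI n x := by
  rw [besselI_natCast]
  exact (summable_besselTerm n x).tsum_pos (besselTerm_nonneg n hx.le) 0
    (by unfold besselTerm; positivity)

lemma besselI_succ_le (n : ℕ) {x : ℝ} (hx : 0 ≤ x) :
    besselI (n + 1) x ≤ x / (2 * (n + 1)) * besselI n x := by
  have hterm (m : ℕ) : besselTerm (n + 1) x m ≤ x / (2 * (n + 1)) * besselTerm n x m := by
    rw [besselTerm_succ]
    gcongr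
    · exact besselTerm_nonneg n hx m
    · linarith [(m.cast_nonneg : (0 : ℝ) ≤ m)]
  have hsucc := besselI_natCast (n + 1) x
  push_cast at hsucc
  rw [hsucc, besselI_natCast, ← tsum_mul_left]
  exact (summable_besselTerm _ x).tsum_le_tsum hterm ((summable_besselTerm n x).mul_left _)

lemma besselI_succ_div_le (n : ℕ) {x : ℝ} (hx : 0 < x) :
    besselI (n + 1) x / besselI n x ≤ x / (2 * (n + 1)) :=
  (div_le_iff₀ (besselI_natCast_pos n hx)).2 (besselI_succ_le n hx.le)

lemma sq_sub_mul_add_one_pos {x r : ℝ} (hx : 0 < x) (hr : r < 1) : 0 < x ^ 2 - 2 * r * x + 1 := by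
  nlinarith [sq_nonneg (x - 1)]

lemma pow_combination_pos_of_odd {x y r : ℝ} (hx : 1 < x) (hy : 1 < y) (hr : r < 1) :
    0 < (y ^ 2 - 1) * (x ^ 2 - 2 * r * x + 1) + 2 * y * (x ^ 2 - 1) := by
  have hy2 : 0 < y ^ 2 - 1 := by nlinarith
  have hx2 : 0 < x ^ 2 - 1 := by nlinarith
  have ha : 0 < x ^ 2 - 2 * r * x + 1 := sq_sub_mul_add_one_pos (by linarith) hr
  positivity

lemma pow_combination_pos_of_even {x y r : ℝ} (hx : 1 < x) (hy : x ^ 2 ≤ y) (hr : r ≤ 1 / 2) :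
    0 < (y ^ 2 - 1) * (x ^ 2 - 2 * r * x + 1) - 2 * y * (x ^ 2 - 1) := by
  have hx1 : 0 < x - 1 := by linarith
  have hy1 : 0 ≤ y ^ 2 - 1 := by nlinarith [one_lt_pow₀ hx two_ne_zero]
  have hr' : x ^ 2 - x + 1 ≤ x ^ 2 - 2 * r * x + 1 := by nlinarith
  have hbase : 0 < (x ^ 4 - 1) * (x ^ 2 - x + 1) - 2 * x ^ 2 * (x ^ 2 - 1) := by
    rw [show (x ^ 4 - 1) * (x ^ 2 - x + 1) - 2 * x ^ 2 * (x ^ 2 - 1)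
        = (x + 1) * (x ^ 2 + x + 1) * (x - 1) ^ 3 by ring]
    positivity
  have hslope : 0 ≤ (x ^ 2 - x + 1) * (y + x ^ 2) - 2 * (x ^ 2 - 1) := by
    have : 0 ≤ x ^ 2 - x + 1 := by nlinarith
    nlinarith [mul_le_mul_of_nonneg_left hy this, pow_le_pow_left₀ (by linarith) hx.le 3]
  calc 0 < (x ^ 4 - 1) * (x ^ 2 - x + 1) - 2 * x ^ 2 * (x ^ 2 - 1)
        + (y - x ^ 2) * ((x ^ 2 - x + 1) * (y + x ^ 2) - 2 * (x ^ 2 - 1)) :=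
        add_pos_of_pos_of_nonneg hbase (mul_nonneg (by linarith) hslope)
    _ = (y ^ 2 - 1) * (x ^ 2 - x + 1) - 2 * y * (x ^ 2 - 1) := by ring
    _ ≤ (y ^ 2 - 1) * (x ^ 2 - 2 * r * x + 1) - 2 * y * (x ^ 2 - 1) := by gcongr

theorem exp_combination_positive (N : ℕ) (hN : 1 ≤ N) (t : ℝ) (ht : 0 < t)
    (r : ℝ) (hr : r = besselI ((N : ℝ) + 1) 1 / besselI (N : ℝ) 1) :
    0 < (Real.exp (2 * N * t) - 1) *
        (Real.exp (2 * t) - 2 * r * Real.exp t + 1) -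
      2 * (-1 : ℝ) ^ N * Real.exp (N * t) * (Real.exp (2 * t) - 1) := by
  have hr_le : r ≤ 1 / 2 := by
    have hN0 : (0 : ℝ) ≤ N := N.cast_nonneg
    calc r ≤ 1 / (2 * (N + 1)) := hr ▸ besselI_succ_div_le N one_pos
      _ ≤ 1 / 2 := by gcongr; linarith
  have hx : 1 < exp t := one_lt_exp_iff.2 ht
  have hexp (k : ℕ) : exp (k * t) = exp t ^ k := by rw [← exp_nat_mul]
  rw [show 2 * (N : ℝ) * t = ((2 * N : ℕ) : ℝ) * t by push_cast; ring,
    show 2 * t = ((2 : ℕ) : ℝ) * t by norm_num, hexp, hexp, hexp, mul_comm 2 N, pow_mul]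
  rcases N.even_or_odd with hN_even | hN_odd
  · rw [hN_even.neg_one_pow, mul_one]
    have hN2 : 2 ≤ N := by obtain ⟨k, rfl⟩ := hN_even; omega
    exact pow_combination_pos_of_even hx (pow_le_pow_right₀ hx.le hN2) hr_le
  · rw [hN_odd.neg_one_pow]
    have hy : 1 < exp t ^ N := one_lt_pow₀ hx (by omega)
    convert pow_combination_pos_of_odd hx hy (show r < 1 by linarith) using 1
    ring
end
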